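/- Let G be a locally finitely presented Grothendieck category admitting a densely I-stratified set S of finitely presented generators (for some downward directed preordered set I without minimum). Then the only flat object of G is the zero object. -/

import Mathlib

open CategoryTheory Limits Opposite

universe v u

namespace Paper

variable {C : Type u} [Category.{v} C]

/-- An object `X` is finitely presented if `Hom(X, -)` preserves (small) filtered
colimits. -/
def FinitelyPresented (X : C) : Prop :=
  Nonempty (PreservesFilteredColimitsOfSize.{v, v} (coyoneda.obj (op X)))

/-- An epimorphism `p : M ⟶ N` is pure if `Hom(X, p)` is surjective for every finitely
presented object `X`. -/
def IsPureEpi {M N : C} (p : M ⟶ N) : Prop :=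
  Epi p ∧ ∀ (X : C), FinitelyPresented X → ∀ g : X ⟶ N, ∃ h : X ⟶ M, h ≫ p = g

/-- An object `F` is flat if every epimorphism onto `F` is pure. -/
def IsFlatObj (F : C) : Prop :=
  ∀ (M : C) (p : M ⟶ F), Epi p → IsPureEpi p

/-- A category is locally finitely presented if it has a set of finitely presented
generators and every object is a (small filtered) direct limit of finitely presented
objects. -/
def LocallyFinitelyPresented (C : Type u) [Category.{v} C] : Prop :=
  (∃ S : Set C, (∀ X ∈ S, FinitelyPresented X) ∧ ObjectProperty.IsSeparating (fun X => X ∈ S)) ∧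
    ∀ M : C, ∃ (J : Type v) (_ : SmallCategory J) (_ : IsFiltered J) (D : J ⥤ C)
      (c : Cocone D), Nonempty (IsColimit c) ∧ Nonempty (c.pt ≅ M) ∧
        ∀ j : J, FinitelyPresented (D.obj j)

/-- A Grothendieck category: an abelian category with exact small filtered colimits
(AB5) and a generator. -/
def IsGrothendieck (C : Type u) [Category.{v} C] [Abelian C]
    [HasColimitsOfSize.{v, v} C] : Prop :=
  (∀ (J : Type v) [SmallCategory J] [IsFiltered J],
      Nonempty (PreservesFiniteLimits (colim : (J ⥤ C) ⥤ C))) ∧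
    ∃ G : C, IsSeparator G

end Paper

/-!
Let `F` be flat and `g : X ⟶ F` with `X ∈ Sᵢ`. By (2) there is a level `j < i` such that `X` has
no nonzero map into any `Sₖ` with `k ≤ j`, and by (3) the strata below `j` still generate, so `F`
is a quotient of a small coproduct of objects from them. Flatness lifts `g` to that coproduct,
and every map from the finitely presented `X` into it vanishes. Hence `g = 0`, and since `S`
generates, `F = 0`.
-/

universe w

theorem Set.Finite.exists_lt_forall_le_notMem {I : Type*} [Preorder I] [IsCodirectedOrder I]
    [NoMinOrder I] {B : Set I} (hB : B.Finite) (a : I) : ∃ j < a, ∀ k ≤ j, k ∉ B := by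
  have : Nonempty I := ⟨a⟩
  choose σ hσ using fun i : I => exists_lt i
  obtain ⟨j, hj⟩ := ((hB.insert a).image σ).bddBelow
  refine ⟨j, (hj ⟨a, Set.mem_insert _ _, rfl⟩).trans_lt (hσ a), fun k hkj hk => ?_⟩
  exact lt_irrefl k (hkj.trans_lt ((hj ⟨k, Set.mem_insert_of_mem _ hk, rfl⟩).trans_lt (hσ k)))

namespace CategoryTheory

section

variable {C : Type*} [Category C]

theorem Limits.sigma_hom_eq_zero_of_finite [Preadditive C] [HasFiniteCoproducts C]
    {ι : Type*} [Finite ι] (f : ι → C) {X : C} (hz : ∀ x (φ : X ⟶ f x), φ = 0)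
    (h : X ⟶ ∐ f) : h = 0 := by
  have := Fintype.ofFinite ι
  have : HasFiniteBiproducts C := HasFiniteBiproducts.of_hasFiniteCoproducts
  rw [← cancel_mono (biproduct.isoCoproduct f).inv, zero_comp]
  exact biproduct.hom_ext _ _ fun x => by simpa using hz x _

theorem comp_eq_comp_iff_imageSubobject_arrow [HasImages C] [HasEqualizers C] {Y F Z : C}
    (f : Y ⟶ F) (a b : F ⟶ Z) :
    f ≫ a = f ≫ b ↔ (imageSubobject f).arrow ≫ a = (imageSubobject f).arrow ≫ b := by
  conv_lhs => rw [← imageSubobject_arrow_comp f, Category.assoc, Category.assoc]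
  exact cancel_epi _

theorem ObjectProperty.IsSeparating.of_exists_epi_sigma [HasCoproducts.{w} C]
    {P Q : ObjectProperty C} (hP : P.IsSeparating)
    (hQ : ∀ G, P G → ∃ (ι : Type w) (f : ι → C) (e : ∐ f ⟶ G), (∀ x, Q (f x)) ∧ Epi e) :
    Q.IsSeparating := by
  intro X Y a b hab
  refine hP a b fun G hG g => ?_
  obtain ⟨ι, f, e, hf, _⟩ := hQ G hG
  rw [← cancel_epi e]
  exact Sigma.hom_ext _ _ fun x => by simpa using hab _ (hf x) (Sigma.ι f x ≫ e ≫ g)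

end

theorem ObjectProperty.IsSeparating.exists_epi_sigmaDesc {C : Type u} [Category.{v} C]
    [HasCoproducts.{v} C] [HasImages C] [HasEqualizers C] [WellPowered.{v} C]
    {P : ObjectProperty C} (hP : P.IsSeparating) (F : C) :
    ∃ (ι : Type v) (Y : ι → C) (ψ : ∀ u, Y u ⟶ F),
      (∀ u, P (Y u)) ∧ Epi (Limits.Sigma.desc ψ) := by
  -- Arrows with the same image equalize the same pairs, and there is only a small set of images.
  let 𝒰 : Set (Subobject F) := {U | ∃ (Y : C) (ψ : Y ⟶ F), P Y ∧ imageSubobject ψ = U}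
  let e : 𝒰 ≃ Shrink.{v} 𝒰 := equivShrink _
  choose Y ψ hY hψ using fun u => (e.symm u).2
  refine ⟨Shrink.{v} 𝒰, Y, ψ, hY, ⟨fun {Z} a b hab => hP a b fun G hG g => ?_⟩⟩
  let u := e ⟨_, G, g, hG, rfl⟩
  have himage : imageSubobject (ψ u) = imageSubobject g := by simp [u, hψ u]
  rw [comp_eq_comp_iff_imageSubobject_arrow, ← himage, ← comp_eq_comp_iff_imageSubobject_arrow]
  simpa using Sigma.ι Y u ≫= hab

end CategoryTheory

namespace Paper

variable {C : Type u} [Category.{v} C]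

theorem FinitelyPresented.hom_sigma_eq_zero [Preadditive C] [HasColimitsOfSize.{v, v} C]
    {X : C} (hX : FinitelyPresented X) {ι : Type v} (f : ι → C)
    (hz : ∀ x (φ : X ⟶ f x), φ = 0) (h : X ⟶ ∐ f) : h = 0 := by
  have := hX.some
  let D := CoproductsFromFiniteFiltered.liftToFinsetObj (Discrete.functor f)
  let c := CoproductsFromFiniteFiltered.liftToFinsetColimitCocone (Discrete.functor f)
  suffices h ≫ (colimit.isoColimitCocone c).hom = 0 by
    simpa using this =≫ (colimit.isoColimitCocone c).inv
  -- `∐ f` is the filtered colimit of its finite subcoproducts, so `h` factors through one of them.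
  have hcl := isColimitOfPreserves (coyoneda.obj (op X)) (colimit.isColimit D)
  obtain ⟨T, y, hy⟩ := Types.jointly_surjective _ hcl (h ≫ (colimit.isoColimitCocone c).hom)
  let y' : X ⟶ ∐ fun x : T => f x.1.as := y
  have hy' : y' ≫ colimit.ι D T = h ≫ (colimit.isoColimitCocone c).hom := hy
  rw [← hy', sigma_hom_eq_zero_of_finite _ (fun x => hz x.1.as) y']
  exact zero_comp

theorem isSeparating_strata_le [HasCoproducts.{v} C] {I : Type*} [Preorder I]
    [IsCodirectedOrder I] [NoMinOrder I] (S : I → Set C)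
    (hsep : ObjectProperty.IsSeparating (fun X => X ∈ ⋃ i : I, S i))
    (h3 : ∀ (i j : I), j < i → ∀ X ∈ S i,
      ∃ (ι : Type v) (f : ι → C) (e : (∐ f) ⟶ X),
        (∀ x : ι, ∃ k : I, k ≤ j ∧ f x ∈ S k) ∧ Epi e) (j : I) :
    ObjectProperty.IsSeparating (fun Y => ∃ k ≤ j, Y ∈ S k) := by
  refine hsep.of_exists_epi_sigma fun G hG => ?_
  obtain ⟨m, hm⟩ := Set.mem_iUnion.1 hG
  obtain ⟨l, hlj, hlm⟩ := exists_le_le j m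
  obtain ⟨l', hl'⟩ := exists_lt l
  obtain ⟨ι, f, e, hf, he⟩ := h3 m l' (hl'.trans_le hlm) G hm
  exact ⟨ι, f, e, fun x => (hf x).imp fun k hk => ⟨hk.1.trans (hl'.le.trans hlj), hk.2⟩, he⟩

theorem stmt8_general (C : Type u) [Category.{v} C] [Abelian C] [HasColimitsOfSize.{v, v} C]
    (hG : IsGrothendieck C)
    (I : Type v) [Preorder I]
    (hdir : ∀ i j : I, ∃ k : I, k ≤ i ∧ k ≤ j)
    (hnomin : ∀ i : I, ∃ j : I, j < i)
    (S : I → Set C)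
    (hfp : ∀ i : I, ∀ X ∈ S i, FinitelyPresented X)
    (hsep : ObjectProperty.IsSeparating (fun X => X ∈ ⋃ i : I, S i))
    (h2 : ∀ (i : I), ∀ X ∈ S i,
      {j : I | j < i ∧ ∃ Y ∈ S j, ∃ f : X ⟶ Y, f ≠ 0}.Finite)
    (h3 : ∀ (i j : I), j < i → ∀ X ∈ S i,
      ∃ (ι : Type v) (f : ι → C) (e : (∐ f) ⟶ X),
        (∀ x : ι, ∃ k : I, k ≤ j ∧ f x ∈ S k) ∧ Epi e) :
    ∀ F : C, IsFlatObj F → IsZero F := by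
  intro F hF
  have : IsCodirectedOrder I := ⟨hdir⟩
  have : NoMinOrder I := ⟨hnomin⟩
  obtain ⟨-, G₀, hG₀⟩ := hG
  have : WellPowered.{v} C := wellPowered_of_isSeparator G₀ hG₀
  rw [IsZero.iff_id_eq_zero]
  refine (Preadditive.isSeparating_iff _).1 hsep (𝟙 F) fun X hX g => ?_
  obtain ⟨i, hi⟩ := Set.mem_iUnion.1 hX
  obtain ⟨j, hji, hj⟩ := (h2 i X hi).exists_lt_forall_le_notMem i
  obtain ⟨ι, Y, ψ, hY, hp⟩ := (isSeparating_strata_le S hsep h3 j).exists_epi_sigmaDesc F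
  obtain ⟨h, rfl⟩ := (hF _ _ hp).2 X (hfp i X hi) g
  suffices h = 0 by rw [this, zero_comp, zero_comp]
  refine (hfp i X hi).hom_sigma_eq_zero Y (fun u φ => ?_) h
  by_contra hφ
  obtain ⟨k, hk, hYk⟩ := hY u
  exact hj k hk ⟨hk.trans_lt hji, _, hYk, φ, hφ⟩

/-- Let `G` be a locally finitely presented Grothendieck category admitting a densely
`I`-stratified set `S = ⋃ᵢ Sᵢ` of finitely presented generators, where `I` is a
downward directed preordered set without minimum:
(1) each `Sᵢ` is nonempty;
(2) for each `i` and `X ∈ Sᵢ` there are only finitely many `j < i` with `Hom(X, -)`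
    nonzero on `Sⱼ`;
(3) for all `j < i` and `X ∈ Sᵢ` there is an epimorphism onto `X` from a coproduct of
    objects of `⋃_{k ≤ j} Sₖ`.
Then the only flat object of `G` is the zero object. -/
theorem stmt8 (C : Type u) [Category.{v} C] [Abelian C] [HasColimitsOfSize.{v, v} C]
    (hG : IsGrothendieck C) (hlfp : LocallyFinitelyPresented C)
    (I : Type v) [Preorder I]
    (hdir : ∀ i j : I, ∃ k : I, k ≤ i ∧ k ≤ j)
    (hnomin : ∀ i : I, ∃ j : I, j < i)
    (S : I → Set C)
    (hfp : ∀ i : I, ∀ X ∈ S i, FinitelyPresented X)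
    (hsep : ObjectProperty.IsSeparating (fun X => X ∈ ⋃ i : I, S i))
    (h1 : ∀ i : I, (S i).Nonempty)
    (h2 : ∀ (i : I), ∀ X ∈ S i,
      {j : I | j < i ∧ ∃ Y ∈ S j, ∃ f : X ⟶ Y, f ≠ 0}.Finite)
    (h3 : ∀ (i j : I), j < i → ∀ X ∈ S i,
      ∃ (ι : Type v) (f : ι → C) (e : (∐ f) ⟶ X),
        (∀ x : ι, ∃ k : I, k ≤ j ∧ f x ∈ S k) ∧ Epi e) :
    ∀ F : C, IsFlatObj F → IsZero F :=
  stmt8_general C hG I hdir hnomin S hfp hsep h2 h3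

end Paper
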